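/- Let k ≥ 2 and R ≥ 1 be integers and let D_0, D_1 be distributions on {0,1}^k with Pr_{x ~ D_0}[every coordinate of x is 0] ≥ 1 − 2/√k and Pr_{x ~ D_1}[every coordinate of x is 0] ≤ 1/√k. Consider the dictatorship-test distribution on (y,b) determined by D_0, D_1, R, and noise rate 1/k². Then for every j ∈ [R], the disjunction h(y) = y_1^{(j)} ∨ y_2^{(j)} ∨ … ∨ y_k^{(j)} satisfies Pr[h(y) = b] ≥ 1 − 3/√k. -/

import Mathlib

open MeasureTheory
open scoped ENNReal

noncomputable section

/-- The real value (0 or 1) of a bit. -/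
def bval (b : Bool) : ℝ := if b then 1 else 0

/-- The distribution of a biased coin on `Bool` with probability `p` of `true`. -/
def coin (p : ℝ) : Measure Bool :=
  (PMF.bernoulli (min (Real.toNNReal p) 1) (min_le_right _ _)).toMeasure

/-- The `γ`-noisy version of a distribution `μ` on the hypercube. -/
def noisy {ι : Type*} [Fintype ι] (γ : ℝ) (μ : Measure (ι → Bool)) :
    Measure (ι → Bool) :=
  Measure.map
    (fun p : (ι → Bool) × ((ι → Bool) × (ι → Bool)) => fun i =>
      if p.2.1 i then p.2.2 i else p.1 i)
    (μ.prod ((Measure.pi fun _ : ι => coin γ).prod (Measure.pi fun _ : ι => coin (1 / 2))))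

/-- The distribution on `{0,1}^{k×R}` whose `R` columns are i.i.d. from `D`; the entry in
row `i` and column `j` is indexed by `(i, j) : Fin k × Fin R`. -/
def colProd {k : ℕ} (D : Measure (Fin k → Bool)) (R : ℕ) :
    Measure (Fin k × Fin R → Bool) :=
  Measure.map (fun x (p : Fin k × Fin R) => x p.2 p.1) (Measure.pi fun _ : Fin R => D)

/-- The dictatorship-test distribution on labeled examples `(y, b)`: pick `b` uniformly from
`{0,1}`, sample the columns of `x` i.i.d. from `D_b`, and apply per-entry noise `γ`. -/
def dictTest {k : ℕ} (D₀ D₁ : Measure (Fin k → Bool)) (R : ℕ) (γ : ℝ) :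
    Measure ((Fin k × Fin R → Bool) × Bool) :=
  (1 / 2 : ℝ≥0∞) • Measure.map (fun y => (y, false)) (noisy γ (colProd D₀ R)) +
    (1 / 2 : ℝ≥0∞) • Measure.map (fun y => (y, true)) (noisy γ (colProd D₁ R))

/-! Noise resamples each entry independently with probability `γ`, so it changes an event
determined by the `k` entries of column `j` with probability at most `kγ = 1/k`. Before noise, the
disjunction of column `j` errs exactly when `b = 0` and the column is not all zero, or `b = 1` and
it is; by hypothesis these have probability at most `2/√k` and `1/√k`. Hence
`Pr[h(y) ≠ b] ≤ (2/√k + 1/√k)/2 + 1/k ≤ 3/√k`. -/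

open Set

instance (p : ℝ) : IsProbabilityMeasure (coin p) := by unfold coin; infer_instance

lemma coin_true_le (p : ℝ) : coin p {true} ≤ ENNReal.ofReal p := by
  rw [coin, PMF.toMeasure_apply_singleton _ _ .of_discrete]
  change ((min p.toNNReal 1 : NNReal) : ℝ≥0∞) ≤ p.toNNReal
  exact_mod_cast min_le_left _ _

instance {ι : Type*} [Fintype ι] (γ : ℝ) (μ : Measure (ι → Bool)) [IsProbabilityMeasure μ] :
    IsProbabilityMeasure (noisy γ μ) :=
  Measure.isProbabilityMeasure_map (measurable_of_finite _).aemeasurable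

instance {k R : ℕ} (D : Measure (Fin k → Bool)) [IsProbabilityMeasure D] :
    IsProbabilityMeasure (colProd D R) :=
  Measure.isProbabilityMeasure_map (measurable_of_finite _).aemeasurable

section Noise

variable {ι : Type*} [Fintype ι]

lemma noisy_apply_le_add (γ : ℝ) (μ : Measure (ι → Bool)) [IsProbabilityMeasure μ]
    (S : Finset ι) {E : Set (ι → Bool)} (hE : DependsOn (· ∈ E) S) :
    noisy γ μ E ≤ μ E + S.card * ENNReal.ofReal γ := by
  set ρ := (Measure.pi fun _ : ι => coin γ).prod (Measure.pi fun _ : ι => coin (1 / 2))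
  -- outside the event that some coordinate of `S` is resampled, the noise leaves `E` invariant
  set resampled : Set (ι → Bool) := ⋃ i ∈ S, (fun s => s i) ⁻¹' {true}
  have hsub : (fun p : (ι → Bool) × ((ι → Bool) × (ι → Bool)) => fun i =>
        if p.2.1 i then p.2.2 i else p.1 i) ⁻¹' E ⊆
      E ×ˢ univ ∪ univ ×ˢ (resampled ×ˢ univ) := by
    rintro ⟨y, s, u⟩ hyE
    by_contra hout
    simp only [resampled, mem_union, mem_prod, mem_univ, and_true, true_and, mem_iUnion,
      Set.mem_preimage, mem_singleton_iff, not_or, not_exists] at hout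
    refine hout.1 (Eq.mp (hE fun i hi => ?_) hyE)
    simp [hout.2 i hi]
  have hresampled : Measure.pi (fun _ : ι => coin γ) resampled ≤ S.card * ENNReal.ofReal γ := by
    calc Measure.pi (fun _ : ι => coin γ) resampled
        ≤ ∑ i ∈ S, Measure.pi (fun _ : ι => coin γ) ((fun s => s i) ⁻¹' {true}) :=
          measure_biUnion_finset_le _ _
      _ = ∑ i ∈ S, coin γ {true} := by
          refine Finset.sum_congr rfl fun i _ => ?_
          exact (measurePreserving_eval _ i).measure_preimage
            (measurableSet_singleton true).nullMeasurableSet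
      _ ≤ S.card * ENNReal.ofReal γ := by
          rw [Finset.sum_const, nsmul_eq_mul]
          gcongr
          exact coin_true_le γ
  calc noisy γ μ E ≤ μ.prod ρ (E ×ˢ univ ∪ univ ×ˢ (resampled ×ˢ univ)) := by
        rw [noisy, Measure.map_apply (measurable_of_finite _) .of_discrete]
        exact measure_mono hsub
    _ ≤ μ.prod ρ (E ×ˢ univ) + μ.prod ρ (univ ×ˢ (resampled ×ˢ univ)) := measure_union_le _ _
    _ ≤ μ E + S.card * ENNReal.ofReal γ := by
        simp only [ρ, Measure.prod_prod, measure_univ, mul_one, one_mul]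
        gcongr

lemma abs_noisy_real_sub_le {γ : ℝ} (hγ : 0 ≤ γ) (μ : Measure (ι → Bool)) [IsProbabilityMeasure μ]
    (S : Finset ι) {E : Set (ι → Bool)} (hE : DependsOn (· ∈ E) S) :
    |(noisy γ μ).real E - μ.real E| ≤ S.card * γ := by
  have real_le : ∀ F : Set (ι → Bool), DependsOn (· ∈ F) S →
      (noisy γ μ).real F ≤ μ.real F + S.card * γ := by
    intro F hF
    have h := ENNReal.toReal_mono (by finiteness) (noisy_apply_le_add γ μ S hF)
    rwa [ENNReal.toReal_add (by finiteness) (by finiteness), ENNReal.toReal_mul,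
      ENNReal.toReal_natCast, ENNReal.toReal_ofReal hγ] at h
  have hle := real_le E hE
  have hge := real_le Eᶜ fun _ _ h => congrArg Not (hE h)
  rw [probReal_compl_eq_one_sub .of_discrete, probReal_compl_eq_one_sub .of_discrete] at hge
  rw [abs_sub_le_iff]
  constructor <;> linarith

end Noise

section Columns

variable {k R : ℕ} (D : Measure (Fin k → Bool)) [IsProbabilityMeasure D]

lemma measurePreserving_colProd_column (j : Fin R) :
    MeasurePreserving (fun y (i : Fin k) => y (i, j)) (colProd D R) D := by
  refine ⟨measurable_of_finite _, ?_⟩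
  rw [colProd, Measure.map_map (measurable_of_finite _) (measurable_of_finite _)]
  exact (measurePreserving_eval _ j).map_eq

lemma abs_noisy_colProd_real_sub_le {γ : ℝ} (hγ : 0 ≤ γ) (j : Fin R) :
    |(noisy γ (colProd D R)).real {y | ∀ i, y (i, j) = false} -
        D.real {x | ∀ i, x i = false}| ≤ k * γ := by
  have hcol : (colProd D R).real {y | ∀ i, y (i, j) = false} = D.real {x | ∀ i, x i = false} :=
    (measurePreserving_colProd_column D j).measureReal_preimage (s := {x | ∀ i, x i = false})
      MeasurableSet.of_discrete.nullMeasurableSet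
  have h := abs_noisy_real_sub_le hγ (colProd D R) (Finset.univ.image fun i => (i, j))
    (E := {y | ∀ i, y (i, j) = false}) fun y y' h => by
      simp only [Finset.coe_image, Finset.coe_univ, Set.image_univ, mem_range, forall_exists_index,
        forall_apply_eq_imp_iff] at h
      simp [h]
  rwa [hcol, Finset.card_image_of_injective _ fun a b hab => (Prod.mk.inj hab).1,
    Finset.card_univ, Fintype.card_fin] at h

end Columns

lemma dictTest_real_apply {k R : ℕ} (D₀ D₁ : Measure (Fin k → Bool)) [IsProbabilityMeasure D₀]
    [IsProbabilityMeasure D₁] (γ : ℝ) (T : Set ((Fin k × Fin R → Bool) × Bool)) :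
    (dictTest D₀ D₁ R γ).real T =
      (noisy γ (colProd D₀ R)).real ((·, false) ⁻¹' T) / 2 +
        (noisy γ (colProd D₁ R)).real ((·, true) ⁻¹' T) / 2 := by
  simp only [measureReal_def]
  rw [dictTest, Measure.add_apply, Measure.smul_apply, Measure.smul_apply,
    Measure.map_apply (measurable_of_finite _) .of_discrete,
    Measure.map_apply (measurable_of_finite _) .of_discrete, smul_eq_mul, smul_eq_mul,
    ENNReal.toReal_add (by finiteness) (by finiteness), ENNReal.toReal_mul, ENNReal.toReal_mul]
  norm_num
  ring

lemma dictTest_real_colOr {k R : ℕ} (D₀ D₁ : Measure (Fin k → Bool)) [IsProbabilityMeasure D₀]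
    [IsProbabilityMeasure D₁] (γ : ℝ) (j : Fin R) :
    (dictTest D₀ D₁ R γ).real {p | (∃ i : Fin k, p.1 (i, j) = true) ↔ p.2 = true} =
      (noisy γ (colProd D₀ R)).real {y | ∀ i, y (i, j) = false} / 2 +
        (1 - (noisy γ (colProd D₁ R)).real {y | ∀ i, y (i, j) = false}) / 2 := by
  rw [dictTest_real_apply, ← probReal_compl_eq_one_sub .of_discrete]
  congr 3 <;> ext y <;> simp

theorem stmt_9_general (k R : ℕ) (hk : 2 ≤ k)
    (D₀ D₁ : Measure (Fin k → Bool)) [IsProbabilityMeasure D₀] [IsProbabilityMeasure D₁]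
    (h0 : 1 - 2 / Real.sqrt k ≤ (D₀ {x | ∀ i, x i = false}).toReal)
    (h1 : (D₁ {x | ∀ i, x i = false}).toReal ≤ 1 / Real.sqrt k)
    (j : Fin R) :
    1 - 3 / Real.sqrt k ≤
      ((dictTest D₀ D₁ R (1 / (k : ℝ) ^ 2))
        {p | ((∃ i : Fin k, p.1 (i, j) = true) ↔ p.2 = true)}).toReal := by
  have hk1 : (1 : ℝ) ≤ k := Nat.one_le_cast.2 (by omega)
  have hγ : (0 : ℝ) ≤ 1 / (k : ℝ) ^ 2 := by positivity
  have hkγ : (k : ℝ) * (1 / (k : ℝ) ^ 2) = 1 / k := by field_simp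
  have hsqrt : 1 / (k : ℝ) ≤ 1 / Real.sqrt k :=
    one_div_le_one_div_of_le (by positivity) (Real.sqrt_le_self_iff.2 (.inr hk1))
  have hA := abs_noisy_colProd_real_sub_le D₀ hγ j
  have hB := abs_noisy_colProd_real_sub_le D₁ hγ j
  rw [hkγ, abs_le] at hA hB
  rw [← measureReal_def] at h0 h1 ⊢
  rw [dictTest_real_colOr]
  have h2 : 2 / Real.sqrt k = 2 * (1 / Real.sqrt k) := by ring
  have h3 : 3 / Real.sqrt k = 3 * (1 / Real.sqrt k) := by ring
  linarith

/-- completeness of the dictatorship test: every column disjunction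
`h(y) = ⋁_{i ∈ [k]} y_i^{(j)}` agrees with the label with probability at least `1 - 3/√k`. -/
theorem stmt_9 (k R : ℕ) (hk : 2 ≤ k) (hR : 1 ≤ R)
    (D₀ D₁ : Measure (Fin k → Bool)) [IsProbabilityMeasure D₀] [IsProbabilityMeasure D₁]
    (h0 : 1 - 2 / Real.sqrt k ≤ (D₀ {x | ∀ i, x i = false}).toReal)
    (h1 : (D₁ {x | ∀ i, x i = false}).toReal ≤ 1 / Real.sqrt k)
    (j : Fin R) :
    1 - 3 / Real.sqrt k ≤
      ((dictTest D₀ D₁ R (1 / (k : ℝ) ^ 2))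
        {p | ((∃ i : Fin k, p.1 (i, j) = true) ↔ p.2 = true)}).toReal :=
  stmt_9_general k R hk D₀ D₁ h0 h1 j
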